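/- arXiv:2205.06120 — 2 statements merged into one kernel-verified Lean document; each statement's English description precedes it below -/
import Mathlib

section
/- The Carlitz exponential exp_C, defined as the 𝔽_q-linear power series exp_C(z) = Σ_{i≥0} z^{q^i}/D_i where D_0 = 1 and D_i = ∏_{j=0}^{i-1}(θ^{q^i} - θ^{q^j}), satisfies the functional equation exp_C(θ z) = θ exp_C(z) + exp_C(z)^q as an identity of formal power series over 𝔽_q(θ). -/
/-!
Compare coefficients. Rescaling by `θ` multiplies the `n`-th coefficient by `θ ^ n`, and in
characteristic `p` the `q`-th power of a power series (`q` a power of `p`) is its coefficientwise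
Frobenius twist expanded by `q`. So both sides vanish off the powers of `q`, the coefficients of
`z` agree trivially, and at `z ^ q ^ (i + 1)` the equation reads
`(θ ^ q ^ (i + 1) - θ) / D (i + 1) = 1 / D i ^ q`. This is the recursion
`D (i + 1) = (θ ^ q ^ (i + 1) - θ) * D i ^ q`, which follows from `(a - b) ^ q = a ^ q - b ^ q`.
-/

open PowerSeries

namespace PowerSeries

variable {R : Type*} [CommRing R] (p : ℕ) [ExpChar R p]

theorem map_iterateFrobenius_expand (f : R⟦X⟧) (k : ℕ) :
    map (iterateFrobenius R p k) (expand (p ^ k) (pow_ne_zero k (expChar_ne_zero R p)) f) =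
      f ^ p ^ k :=
  MvPowerSeries.map_iterateFrobenius_expand p (expChar_ne_zero R p) f k

theorem coeff_pow_expChar_pow (f : R⟦X⟧) (k n : ℕ) :
    coeff n (f ^ p ^ k) = if p ^ k ∣ n then coeff (n / p ^ k) f ^ p ^ k else 0 := by
  rw [← map_iterateFrobenius_expand, coeff_map, coeff_expand]
  split_ifs
  · exact iterateFrobenius_def ..
  · exact map_zero _

end PowerSeries

theorem RatFunc.X_pow_injective (K : Type*) [Field K] :
    Function.Injective fun n : ℕ => (RatFunc.X : RatFunc K) ^ n := by
  intro a b h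
  have : (Polynomial.X : Polynomial K) ^ a = Polynomial.X ^ b :=
    IsFractionRing.injective (Polynomial K) (RatFunc K) (by simpa using h)
  simpa using congrArg Polynomial.natDegree this

section CarlitzFactorial

variable {K : Type*} [CommRing K] (θ : K)

def carlitzFactorial (q i : ℕ) : K :=
  ∏ j ∈ Finset.range i, (θ ^ q ^ i - θ ^ q ^ j)

theorem carlitzFactorial_succ {q p k : ℕ} [ExpChar K p] (hq : q = p ^ k) (i : ℕ) :
    carlitzFactorial θ q (i + 1) = (θ ^ q ^ (i + 1) - θ) * carlitzFactorial θ q i ^ q := by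
  rw [carlitzFactorial, carlitzFactorial, Finset.prod_range_succ', ← Finset.prod_pow, mul_comm]
  congr 1
  · simp
  · refine Finset.prod_congr rfl fun j _ => ?_
    rw [hq, sub_pow_expChar_pow, ← hq, ← pow_mul, ← pow_mul, ← pow_succ, ← pow_succ]

theorem carlitzFactorial_ne_zero [IsDomain K] (hθ : Function.Injective (θ ^ · : ℕ → K))
    {q : ℕ} (hq : 1 < q) (i : ℕ) : carlitzFactorial θ q i ≠ 0 :=
  Finset.prod_ne_zero_iff.mpr fun j hj => sub_ne_zero.mpr fun h =>
    (Finset.mem_range.mp hj).ne' (Nat.pow_right_injective hq (hθ h : q ^ i = q ^ j))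

end CarlitzFactorial

theorem carlitzFactorial_succ_inv {K : Type*} [Field K] (θ : K) {q p k : ℕ} [ExpChar K p]
    (hq : q = p ^ k) {i : ℕ} (h : carlitzFactorial θ q (i + 1) ≠ 0) :
    θ ^ q ^ (i + 1) * (carlitzFactorial θ q (i + 1))⁻¹ =
      θ * (carlitzFactorial θ q (i + 1))⁻¹ + (carlitzFactorial θ q i)⁻¹ ^ q := by
  rw [← sub_eq_iff_eq_add', ← sub_mul]
  rw [carlitzFactorial_succ θ hq] at h ⊢
  rw [mul_inv, ← mul_assoc, mul_inv_cancel₀ (left_ne_zero_of_mul h), one_mul, inv_pow]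

theorem rescale_eq_C_mul_add_pow_of_coeff {K : Type*} [Field K] {p k q : ℕ} [ExpChar K p]
    (hq : q = p ^ k) (hq1 : 1 < q) (θ : K) (hD : ∀ i, carlitzFactorial θ q i ≠ 0) (E : K⟦X⟧)
    (hE1 : ∀ i, coeff (q ^ i) E = (carlitzFactorial θ q i)⁻¹)
    (hE2 : ∀ n, (∀ i, n ≠ q ^ i) → coeff n E = 0) :
    rescale θ E = C θ * E + E ^ q := by
  ext n
  rw [coeff_rescale, map_add, coeff_C_mul, hq, coeff_pow_expChar_pow, ← hq]
  by_cases hn : ∃ i, n = q ^ i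
  · obtain ⟨i, rfl⟩ := hn
    cases i with
    | zero => rw [pow_zero, if_neg (Nat.not_dvd_of_pos_of_lt one_pos hq1), add_zero, pow_one]
    | succ i =>
      rw [if_pos (dvd_pow_self q i.succ_ne_zero), pow_succ, Nat.mul_div_cancel _ (by omega),
        ← pow_succ, hE1, hE1, carlitzFactorial_succ_inv θ hq (hD _)]
  · push Not at hn
    rw [hE2 n hn, mul_zero, mul_zero, zero_add]
    split_ifs with hdvd
    · obtain ⟨m, rfl⟩ := hdvd
      have hm : ∀ i, m ≠ q ^ i := fun i hi => hn (i + 1) (by rw [hi, pow_succ'])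
      rw [Nat.mul_div_cancel_left _ (by omega), hE2 m hm, zero_pow (by omega)]
    · rfl

/-- The Carlitz exponential `exp_C(z) = Σ_{i≥0} z^{q^i}/D_i`, with
`D_0 = 1`, `D_i = ∏_{j<i} (θ^{q^i} - θ^{q^j})`, satisfies the functional equation
`exp_C(θ z) = θ exp_C(z) + exp_C(z)^q` as formal power series over `𝔽_q(θ)`.
Here `𝔽_q(θ)` is modelled as `RatFunc 𝔽` with `θ = X`. -/
theorem stmt_3 (𝔽 : Type*) [Field 𝔽] [Fintype 𝔽] (q : ℕ) (hq : q = Fintype.card 𝔽)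
    (D : ℕ → RatFunc 𝔽)
    (hD : ∀ i : ℕ, D i = ∏ j ∈ Finset.range i,
      ((RatFunc.X : RatFunc 𝔽) ^ q ^ i - RatFunc.X ^ q ^ j))
    (E : PowerSeries (RatFunc 𝔽))
    (hE1 : ∀ i : ℕ, PowerSeries.coeff (R := RatFunc 𝔽) (q ^ i) E = (D i)⁻¹)
    (hE2 : ∀ k : ℕ, (∀ i : ℕ, k ≠ q ^ i) → PowerSeries.coeff (R := RatFunc 𝔽) k E = 0) :
    PowerSeries.rescale (RatFunc.X : RatFunc 𝔽) E =
      PowerSeries.C (R := RatFunc 𝔽) RatFunc.X * E + E ^ q := by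
  obtain ⟨k, hp, hcard⟩ := FiniteField.card 𝔽 (ringChar 𝔽)
  have : CharP (RatFunc 𝔽) (ringChar 𝔽) :=
    charP_of_injective_algebraMap (algebraMap 𝔽 (RatFunc 𝔽)).injective _
  have : ExpChar (RatFunc 𝔽) (ringChar 𝔽) := ExpChar.prime hp
  have hq1 : 1 < q := hq ▸ Fintype.one_lt_card
  obtain rfl : D = carlitzFactorial RatFunc.X q := funext hD
  exact rescale_eq_C_mul_add_pow_of_coeff (hq.trans hcard) hq1 _
    (carlitzFactorial_ne_zero _ (RatFunc.X_pow_injective 𝔽) hq1) E hE1 hE2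
end

section
/- Let D = diag(d_1,…,d_r) be a diagonal matrix over a nonarchimedean normed field with ‖d_j^{-1}‖ < 1 for all j, and suppose the norm of each (D^{-1})^{(j)} (Frobenius-twisted inverse) is bounded by a constant ρ < 1 uniformly in j ≤ -1. If E is strictly upper triangular, then the norm of the product (D^{-1}+E)^{(-1)} (D^{-1}+E)^{(-2)} ⋯ (D^{-1}+E)^{(-i)} tends to 0 as i → ∞. -/
/-!
Every factor `(D⁻¹ + E)^{(-j)}` is upper triangular with diagonal entries of norm `≤ ρ` and
off-diagonal entries of norm `≤ C`. Expanding a product of `n` such factors, the entry `(a, b)`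
is a sum of words that step off the diagonal at most `b - a < r` times, so by the ultrametric
inequality its norm is at most `C ^ (b - a) * ρ ^ (n - (b - a)) ≤ C ^ r * ρ ^ (n - r) → 0`
(after replacing `C` by `max C 1` and `ρ` by `max ρ 0`).
-/

open Filter Topology

namespace Matrix

variable {T : Type*} [SeminormedRing T] {r : ℕ}

/-- The entry bounds satisfied by a product of `n` upper triangular factors whose diagonal
entries have norm `≤ ρ` and whose other entries have norm `≤ C`. -/
def HasTriangularDecay (C ρ : ℝ) (n : ℕ) (M : Matrix (Fin r) (Fin r) T) : Prop :=
  M.IsUpperTriangular ∧ ∀ a b, ‖M a b‖ ≤ C ^ ((b : ℕ) - a) * ρ ^ (n - ((b : ℕ) - a))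

variable {C ρ : ℝ}

theorem hasTriangularDecay_one_of_norm_le {M : Matrix (Fin r) (Fin r) T}
    (hM : M.IsUpperTriangular) (hC : 1 ≤ C) (hdiag : ∀ a, ‖M a a‖ ≤ ρ)
    (hoff : ∀ a b, a < b → ‖M a b‖ ≤ C) : HasTriangularDecay C ρ 1 M := by
  refine ⟨hM, fun a b => ?_⟩
  rcases lt_trichotomy a b with hab | rfl | hba
  · have hab' : (a : ℕ) < b := hab
    rw [show 1 - ((b : ℕ) - a) = 0 by omega, pow_zero, mul_one]
    exact (hoff a b hab).trans (le_self_pow₀ hC (by omega))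
  · simpa using hdiag a
  · rw [hM hba, norm_zero]
    have hba' : (b : ℕ) < a := hba
    rw [show (b : ℕ) - a = 0 by omega, pow_zero, one_mul, pow_one]
    exact (norm_nonneg _).trans (hdiag a)

theorem hasTriangularDecay_map_add {R : Type*} [Semiring R] (f : R →+* T)
    {A E : Matrix (Fin r) (Fin r) R} (hA : ∀ a b, a ≠ b → A a b = 0)
    (hE : ∀ a b, b ≤ a → E a b = 0) (hC : 1 ≤ C) (hAρ : ∀ a, ‖f (A a a)‖ ≤ ρ)
    (hEC : ∀ a b, ‖f (E a b)‖ ≤ C) : HasTriangularDecay C ρ 1 ((A + E).map f) := by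
  refine hasTriangularDecay_one_of_norm_le (fun a b hba => ?_) hC (fun a => ?_) fun a b hab => ?_
  · simp [hA a b (ne_of_gt hba), hE a b (le_of_lt hba)]
  · simpa [hE a a le_rfl] using hAρ a
  · simpa [hA a b (ne_of_lt hab)] using hEC a b

theorem HasTriangularDecay.mul [IsUltrametricDist T] {n m : ℕ} {M N : Matrix (Fin r) (Fin r) T}
    (hC : 0 ≤ C) (hρ₀ : 0 ≤ ρ) (hρ₁ : ρ ≤ 1)
    (hM : HasTriangularDecay C ρ n M) (hN : HasTriangularDecay C ρ m N) :
    HasTriangularDecay C ρ (n + m) (M * N) := by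
  refine ⟨hM.1.mul hN.1, fun a b => ?_⟩
  rw [mul_apply]
  refine IsUltrametricDist.norm_sum_le_of_forall_le_of_nonneg (by positivity) fun k _ => ?_
  rcases lt_or_ge k a with hka | hak
  · rw [hM.1 hka, zero_mul, norm_zero]
    positivity
  rcases lt_or_ge b k with hbk | hkb
  · rw [hN.1 hbk, mul_zero, norm_zero]
    positivity
  have hak' : (a : ℕ) ≤ k := hak
  have hkb' : (k : ℕ) ≤ b := hkb
  calc ‖M a k * N k b‖ ≤ ‖M a k‖ * ‖N k b‖ := norm_mul_le _ _
    _ ≤ C ^ ((k : ℕ) - a) * ρ ^ (n - ((k : ℕ) - a)) *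
          (C ^ ((b : ℕ) - k) * ρ ^ (m - ((b : ℕ) - k))) :=
        mul_le_mul (hM.2 a k) (hN.2 k b) (norm_nonneg _) (by positivity)
    _ = C ^ ((b : ℕ) - a) * ρ ^ (n - ((k : ℕ) - a) + (m - ((b : ℕ) - k))) := by
        rw [show (b : ℕ) - a = ((k : ℕ) - a) + ((b : ℕ) - k) by omega, pow_add, pow_add]
        ring
    _ ≤ C ^ ((b : ℕ) - a) * ρ ^ (n + m - ((b : ℕ) - a)) :=
        mul_le_mul_of_nonneg_left (pow_le_pow_of_le_one hρ₀ hρ₁ (by omega)) (by positivity)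

theorem HasTriangularDecay.mul_list_prod [IsUltrametricDist T]
    (hC : 0 ≤ C) (hρ₀ : 0 ≤ ρ) (hρ₁ : ρ ≤ 1)
    (L : List (Matrix (Fin r) (Fin r) T)) (hL : ∀ N ∈ L, HasTriangularDecay C ρ 1 N) :
    ∀ {n : ℕ} {M : Matrix (Fin r) (Fin r) T}, HasTriangularDecay C ρ n M →
      HasTriangularDecay C ρ (n + L.length) (M * L.prod) := by
  induction L with
  | nil => simp
  | cons N L ih =>
    intro n M hM
    rw [List.prod_cons, ← mul_assoc, List.length_cons, ← add_assoc, add_right_comm]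
    exact ih (fun N' hN' => hL N' (List.mem_cons_of_mem N hN'))
      (hM.mul hC hρ₀ hρ₁ (hL N List.mem_cons_self))

theorem hasTriangularDecay_list_prod [IsUltrametricDist T]
    (hC : 0 ≤ C) (hρ₀ : 0 ≤ ρ) (hρ₁ : ρ ≤ 1)
    {L : List (Matrix (Fin r) (Fin r) T)} (hne : L ≠ [])
    (hL : ∀ N ∈ L, HasTriangularDecay C ρ 1 N) : HasTriangularDecay C ρ L.length L.prod := by
  obtain ⟨M, L, rfl⟩ := List.exists_cons_of_ne_nil hne
  rw [List.prod_cons, List.length_cons, add_comm]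
  exact (hL M List.mem_cons_self).mul_list_prod hC hρ₀ hρ₁ L
    fun N hN => hL N (List.mem_cons_of_mem M hN)

theorem HasTriangularDecay.norm_apply_le {n : ℕ} {M : Matrix (Fin r) (Fin r) T}
    (hM : HasTriangularDecay C ρ n M) (hC : 1 ≤ C) (hρ₀ : 0 ≤ ρ) (hρ₁ : ρ ≤ 1) (a b : Fin r) :
    ‖M a b‖ ≤ C ^ r * ρ ^ (n - r) := by
  have hba : (b : ℕ) - a ≤ r := by omega
  exact (hM.2 a b).trans <| mul_le_mul (pow_le_pow_right₀ hC hba)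
    (pow_le_pow_of_le_one hρ₀ hρ₁ (by omega)) (by positivity) (by positivity)

end Matrix

theorem Matrix.norm_apply_le_of_iSup_le {T : Type*} [Norm T] {r : ℕ}
    {M : Matrix (Fin r) (Fin r) T} {c : ℝ} (h : ⨆ a, ⨆ b, ‖M a b‖ ≤ c) (a b : Fin r) :
    ‖M a b‖ ≤ c :=
  calc ‖M a b‖ ≤ ⨆ b, ‖M a b‖ :=
        le_ciSup (f := fun b => ‖M a b‖) (Set.finite_range _).bddAbove b
    _ ≤ ⨆ a, ⨆ b, ‖M a b‖ :=
        le_ciSup (f := fun a => ⨆ b, ‖M a b‖) (Set.finite_range _).bddAbove a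
    _ ≤ c := h

theorem stmt_9_general (T : Type*) [SeminormedCommRing T] [IsUltrametricDist T] (r : ℕ)
    (τ : ℕ → T →+* T)
    (A E : Matrix (Fin r) (Fin r) T)
    (hAdiag : ∀ i j : Fin r, i ≠ j → A i j = 0)
    (ρ : ℝ) (hρ : ρ < 1)
    (hρA : ∀ j : ℕ, 1 ≤ j → (⨆ a : Fin r, ⨆ b : Fin r, ‖(A.map (τ j)) a b‖) ≤ ρ)
    (hE : ∀ i j : Fin r, j ≤ i → E i j = 0)
    (C : ℝ) (hC : ∀ j : ℕ, 1 ≤ j → (⨆ a : Fin r, ⨆ b : Fin r, ‖(E.map (τ j)) a b‖) ≤ C) :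
    Filter.Tendsto (fun i : ℕ =>
        ⨆ a : Fin r, ⨆ b : Fin r,
          ‖(List.ofFn fun j : Fin i => (A + E).map (τ ((j : ℕ) + 1))).prod a b‖)
      Filter.atTop (nhds 0) := by
  set C' := max C 1
  set ρ' := max ρ 0
  have hC' : 1 ≤ C' := le_max_right _ _
  have hρ'₀ : 0 ≤ ρ' := le_max_right _ _
  have hρ'₁ : ρ' < 1 := max_lt hρ zero_lt_one
  have hfactor (j : ℕ) (hj : 1 ≤ j) : Matrix.HasTriangularDecay C' ρ' 1 ((A + E).map (τ j)) :=
    Matrix.hasTriangularDecay_map_add (τ j) hAdiag hE hC'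
      (fun a => (Matrix.norm_apply_le_of_iSup_le (hρA j hj) a a).trans (le_max_left _ _))
      (fun a b => (Matrix.norm_apply_le_of_iSup_le (hC j hj) a b).trans (le_max_left _ _))
  have hbound (i : ℕ) (hi : 1 ≤ i) :
      ⨆ a : Fin r, ⨆ b : Fin r,
        ‖(List.ofFn fun j : Fin i => (A + E).map (τ ((j : ℕ) + 1))).prod a b‖
        ≤ C' ^ r * ρ' ^ (i - r) := by
    have hprod := Matrix.hasTriangularDecay_list_prod (zero_le_one.trans hC') hρ'₀ hρ'₁.le
      (L := List.ofFn fun j : Fin i => (A + E).map (τ ((j : ℕ) + 1)))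
      (List.ofFn_eq_nil_iff.not.mpr (by omega)) (by
        simp only [List.mem_ofFn, forall_exists_index]
        rintro _ j rfl
        exact hfactor _ (Nat.le_add_left 1 j))
    rw [List.length_ofFn] at hprod
    exact Real.iSup_le (fun a => Real.iSup_le (hprod.norm_apply_le hC' hρ'₀ hρ'₁.le a)
      (by positivity)) (by positivity)
  have hlimit : Tendsto (fun i : ℕ => C' ^ r * ρ' ^ (i - r)) atTop (𝓝 0) := by
    simpa using ((tendsto_pow_atTop_nhds_zero_of_lt_one hρ'₀ hρ'₁).comp
      (tendsto_sub_atTop_nat r)).const_mul (C' ^ r)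
  exact squeeze_zero'
    (Eventually.of_forall fun _ => Real.iSup_nonneg fun _ => Real.iSup_nonneg fun _ => norm_nonneg _)
    ((eventually_ge_atTop 1).mono hbound) hlimit

/-- Let `D⁻¹` (here called `A`) be diagonal with all Frobenius twists
`(D⁻¹)^{(-j)} = A.map (τ j)` (`j ≥ 1`) of norm at most `ρ < 1`, let `E` be strictly upper
triangular with twists of norm at most `C`. Then the norm of the product
`(D⁻¹+E)^{(-1)} (D⁻¹+E)^{(-2)} ⋯ (D⁻¹+E)^{(-i)}` tends to `0` as `i → ∞`
(matrix norms being the suprema of the entry norms, in a nonarchimedean seminormed ring,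
where every diagonal entry of `A` satisfies `‖(A i i)⁻¹-type bound‖ < 1` via `ρ`). -/
theorem stmt_9 (T : Type*) [SeminormedCommRing T] [IsUltrametricDist T] (r : ℕ)
    (τ : ℕ → T →+* T)
    (A E : Matrix (Fin r) (Fin r) T)
    (hAdiag : ∀ i j : Fin r, i ≠ j → A i j = 0)
    (hAnorm : ∀ i : Fin r, ‖A i i‖ < 1)
    (ρ : ℝ) (hρ : ρ < 1)
    (hρA : ∀ j : ℕ, 1 ≤ j → (⨆ a : Fin r, ⨆ b : Fin r, ‖(A.map (τ j)) a b‖) ≤ ρ)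
    (hE : ∀ i j : Fin r, j ≤ i → E i j = 0)
    (C : ℝ) (hC : ∀ j : ℕ, 1 ≤ j → (⨆ a : Fin r, ⨆ b : Fin r, ‖(E.map (τ j)) a b‖) ≤ C) :
    Filter.Tendsto (fun i : ℕ =>
        ⨆ a : Fin r, ⨆ b : Fin r,
          ‖(List.ofFn fun j : Fin i => (A + E).map (τ ((j : ℕ) + 1))).prod a b‖)
      Filter.atTop (nhds 0) :=
  stmt_9_general T r τ A E hAdiag ρ hρ hρA hE C hC
end
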